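/- Let (K,|·|) be a normed field, f ∈ K[z] a polynomial of degree n ≥ 2 having n simple zeros in K, ξ ∈ Kⁿ a root-vector of f, and 1 ≤ p ≤ ∞ with conjugate exponent q. Suppose the initial guess x⁰ ∈ Kⁿ satisfies E(x⁰) = ‖(x⁰ − ξ)/d(ξ)‖_p < R(n,p) = (2^{1/(n−1)} − 1)/(2^{1/q}(2^{1/(n−1)} − 1) + (n−1)^{−1/p}). Then the Weierstrass iteration x^{k+1} = x^k − W(x^k) is well defined (each x^k has pairwise distinct components), converges to ξ, and for all k ≥ 0 and each index i: |x^{k+1}_i − ξ_i| ≤ λ^{2^k} |x^k_i − ξ_i| and |x^k_i − ξ_i| ≤ λ^{2^k − 1} |x⁰_i − ξ_i|, where λ = φ(E(x⁰)) < 1 and φ(t) = (1 + t/((n−1)^{1/p}(1 − 2^{1/q} t)))^{n−1} − 1. -/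

import Mathlib

/-!
Write `uᵢ = |yᵢ - ξᵢ| / dᵢ(ξ)`, so that `E(y) = ‖u‖_p`. Hölder's inequality gives
`uᵢ + uⱼ ≤ 2^{1/q} E(y)`, hence `|yᵢ - yⱼ| ≥ (1 - 2^{1/q} E(y)) |ξᵢ - ξⱼ|`: the components of `y`
stay separated. Since `f(yᵢ) = a₀ ∏ⱼ (yᵢ - ξⱼ)`, the new error is
`yᵢ - Wᵢ(y) - ξᵢ = (yᵢ - ξᵢ) (1 - ∏_{j ≠ i} (1 + tⱼ))` with `tⱼ = (yⱼ - ξⱼ)/(yᵢ - yⱼ)`.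
Bounding `Σ |tⱼ|` by Hölder once more and `∏ (1 + |tⱼ|)` by AM–GM yields
`|yᵢ - Wᵢ(y) - ξᵢ| ≤ φ(E(y)) |yᵢ - ξᵢ|`, so `E(x^{k+1}) ≤ φ(E(xᵏ)) E(xᵏ)`. As `φ` is increasing
and quasi-homogeneous, `φ(s t) ≤ s φ(t)` for `s ∈ [0, 1]`, induction gives `φ(E(xᵏ)) ≤ λ^{2ᵏ}`;
and `λ < 1` because `(1 + (2^{1/(n-1)} - 1))^{n-1} = 2`.
-/

open Finset Filter Topology
open scoped ENNReal

noncomputable def pnorm {n : ℕ} (p : ℝ≥0∞) (v : Fin n → ℝ) : ℝ :=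
  if p = ⊤ then ⨆ i, |v i| else (∑ i, |v i| ^ p.toReal) ^ (1 / p.toReal)

noncomputable def epow (a : ℝ) (p : ℝ≥0∞) : ℝ :=
  if p = ⊤ then 1 else a ^ (1 / p.toReal)

noncomputable def dsep {K : Type*} [NormedField K] {n : ℕ} (x : Fin n → K) (i : Fin n) : ℝ :=
  sInf {r : ℝ | ∃ j, j ≠ i ∧ r = ‖x i - x j‖}

noncomputable def Wcorr {K : Type*} [NormedField K] {n : ℕ} (f : Polynomial K)
    (x : Fin n → K) (i : Fin n) : K :=
  Polynomial.eval (x i) f / (f.leadingCoeff * ∏ j ∈ Finset.univ.erase i, (x i - x j))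

def IsRootVector {K : Type*} [NormedField K] {n : ℕ} (f : Polynomial K) (ξ : Fin n → K) : Prop :=
  ∀ z : K, Polynomial.eval z f = f.leadingCoeff * ∏ i, (z - ξ i)

lemma epow_pos {a : ℝ} (ha : 0 < a) (p : ℝ≥0∞) : 0 < epow a p := by
  unfold epow; split_ifs
  · exact one_pos
  · positivity

lemma epow_eq_div_epow {p q : ℝ≥0∞} [p.HolderConjugate q] {a : ℝ} (ha : 0 < a) :
    epow a q = a / epow a p := by
  obtain rfl | hp := eq_or_ne p ⊤
  · obtain rfl : q = 1 := (ENNReal.HolderConjugate.eq_top_iff_eq_one ⊤ q).mp rfl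
    simp [epow]
  obtain rfl | hq := eq_or_ne q ⊤
  · obtain rfl : p = 1 := (ENNReal.HolderConjugate.eq_top_iff_eq_one ⊤ p).mp rfl
    simp [epow, ha.ne']
  have hpq := ENNReal.HolderConjugate.toReal_of_ne_top hp hq
  simp only [epow, hp, hq, if_false, one_div, ← hpq.one_sub_inv]
  rw [Real.rpow_sub ha, Real.rpow_one]

lemma pnorm_nonneg {n : ℕ} (p : ℝ≥0∞) (v : Fin n → ℝ) : 0 ≤ pnorm p v := by
  unfold pnorm; split_ifs
  · exact Real.iSup_nonneg fun i => abs_nonneg _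
  · positivity

lemma pnorm_le_mul_pnorm {n : ℕ} {p : ℝ≥0∞} (hp : p ≠ 0) {s : ℝ} (hs : 0 ≤ s)
    {v w : Fin n → ℝ} (h : ∀ i, |v i| ≤ s * |w i|) : pnorm p v ≤ s * pnorm p w := by
  unfold pnorm; split_ifs with hpt
  · exact Real.iSup_le (fun i => (h i).trans <| mul_le_mul_of_nonneg_left
      (le_ciSup (Finite.bddAbove_range fun i => |w i|) i) hs)
      (mul_nonneg hs (Real.iSup_nonneg fun i => abs_nonneg _))
  have hr : 0 < p.toReal := ENNReal.toReal_pos hp hpt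
  have hsum : ∑ i, |v i| ^ p.toReal ≤ s ^ p.toReal * ∑ i, |w i| ^ p.toReal := by
    rw [Finset.mul_sum]
    gcongr with i
    rw [← Real.mul_rpow hs (abs_nonneg _)]
    gcongr
    exact h i
  calc (∑ i, |v i| ^ p.toReal) ^ (1 / p.toReal)
      ≤ (s ^ p.toReal * ∑ i, |w i| ^ p.toReal) ^ (1 / p.toReal) := by gcongr
    _ = s * (∑ i, |w i| ^ p.toReal) ^ (1 / p.toReal) := by
      rw [Real.mul_rpow (Real.rpow_nonneg hs _) (by positivity), ← Real.rpow_mul hs,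
        mul_one_div_cancel hr.ne', Real.rpow_one]

/-- Hölder's inequality against the indicator of `S`, whose `q`-norm is `#S ^ (1/q)`. -/
lemma sum_le_epow_card_mul_pnorm {n : ℕ} {p q : ℝ≥0∞} [p.HolderConjugate q] {u : Fin n → ℝ}
    (hu : ∀ i, 0 ≤ u i) (S : Finset (Fin n)) : ∑ j ∈ S, u j ≤ epow #S q * pnorm p u := by
  obtain rfl | hp := eq_or_ne p ⊤
  · obtain rfl : q = 1 := (ENNReal.HolderConjugate.eq_top_iff_eq_one ⊤ q).mp rfl
    simp only [epow, pnorm, ENNReal.one_ne_top, if_true, if_false, ENNReal.toReal_one, div_one,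
      Real.rpow_one]
    calc ∑ j ∈ S, u j ≤ ∑ _j ∈ S, ⨆ i, |u i| := by
          gcongr with j
          exact (le_abs_self _).trans (le_ciSup (Finite.bddAbove_range fun i => |u i|) j)
      _ = #S * ⨆ i, |u i| := by rw [Finset.sum_const, nsmul_eq_mul]
  obtain rfl | hq := eq_or_ne q ⊤
  · obtain rfl : p = 1 := (ENNReal.HolderConjugate.eq_top_iff_eq_one ⊤ p).mp rfl
    simp only [epow, pnorm, ENNReal.one_ne_top, if_true, if_false, ENNReal.toReal_one, div_one,
      Real.rpow_one, one_mul]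
    calc ∑ j ∈ S, u j ≤ ∑ j, u j := Finset.sum_le_univ_sum_of_nonneg hu
      _ = ∑ j, |u j| := by simp only [abs_of_nonneg (hu _)]
  have hpq := ENNReal.HolderConjugate.toReal_of_ne_top hp hq
  have holder := Real.inner_le_Lp_mul_Lq_of_nonneg S hpq (g := fun _ => 1) (fun i _ => hu i)
    (fun _ _ => zero_le_one)
  simp only [mul_one, Real.one_rpow, Finset.sum_const, nsmul_eq_mul] at holder
  simp only [epow, pnorm, hp, hq, if_false, abs_of_nonneg (hu _)]
  refine holder.trans ?_
  rw [mul_comm]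
  gcongr
  · exact Finset.sum_nonneg fun i _ => Real.rpow_nonneg (hu i) _
  · exact fun i _ _ => Real.rpow_nonneg (hu i) _
  · exact S.subset_univ

lemma Finset.norm_prod_one_add_sub_one_le_prod_sub_one {ι R : Type*} [NormedCommRing R]
    [NormOneClass R] (s : Finset ι) (t : ι → R) :
    ‖∏ j ∈ s, (1 + t j) - 1‖ ≤ ∏ j ∈ s, (1 + ‖t j‖) - 1 := by
  classical
  induction s using Finset.induction_on with
  | empty => simp
  | insert a s ha ih =>
    have hP : ‖∏ j ∈ s, (1 + t j)‖ ≤ ∏ j ∈ s, (1 + ‖t j‖) :=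
      (Finset.norm_prod_le _ _).trans <| Finset.prod_le_prod (fun _ _ => norm_nonneg _)
        fun j _ => (norm_add_le _ _).trans_eq (by rw [norm_one])
    rw [Finset.prod_insert ha, Finset.prod_insert ha,
      show (1 + t a) * ∏ j ∈ s, (1 + t j) - 1
        = (∏ j ∈ s, (1 + t j) - 1) + t a * ∏ j ∈ s, (1 + t j) by ring]
    calc _ ≤ ‖∏ j ∈ s, (1 + t j) - 1‖ + ‖t a‖ * ‖∏ j ∈ s, (1 + t j)‖ :=
          norm_add_le_of_le le_rfl (norm_mul_le _ _)
      _ ≤ (∏ j ∈ s, (1 + ‖t j‖) - 1) + ‖t a‖ * ∏ j ∈ s, (1 + ‖t j‖) := by gcongr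
      _ = (1 + ‖t a‖) * ∏ j ∈ s, (1 + ‖t j‖) - 1 := by ring

lemma Finset.prod_one_add_le_pow_card {ι : Type*} (s : Finset ι) {a : ι → ℝ}
    (ha : ∀ j ∈ s, 0 ≤ a j) : ∏ j ∈ s, (1 + a j) ≤ (1 + (∑ j ∈ s, a j) / #s) ^ #s := by
  obtain rfl | hs := s.eq_empty_or_nonempty
  · simp
  have hcard : (0 : ℝ) < #s := by exact_mod_cast hs.card_pos
  have hz : ∀ j ∈ s, 0 ≤ 1 + a j := fun j hj => by linarith [ha j hj]
  have amgm := Real.geom_mean_le_arith_mean s (fun _ => 1) (fun j => 1 + a j)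
    (fun _ _ => zero_le_one) (by simpa using hcard) hz
  simp only [Real.rpow_one, Finset.sum_const, nsmul_eq_mul, mul_one, one_mul] at amgm
  have hmean : (∑ j ∈ s, (1 + a j)) / #s = 1 + (∑ j ∈ s, a j) / #s := by
    rw [Finset.sum_add_distrib, Finset.sum_const, nsmul_eq_mul, mul_one, add_div,
      div_self hcard.ne']
  rw [← hmean]
  calc ∏ j ∈ s, (1 + a j) = ((∏ j ∈ s, (1 + a j)) ^ (#s : ℝ)⁻¹) ^ #s :=
        (Real.rpow_inv_natCast_pow (Finset.prod_nonneg hz) hs.card_pos.ne').symm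
    _ ≤ _ := pow_le_pow_left₀ (Real.rpow_nonneg (Finset.prod_nonneg hz) _) amgm _

/-- The paper's `φ`, for `a = (n-1)^{1/p}`, `b = 2^{1/q}` and `m = n - 1`. -/
noncomputable def weierstrassPhi (a b : ℝ) (m : ℕ) (t : ℝ) : ℝ :=
  (1 + t / (a * (1 - b * t))) ^ m - 1

/-- The paper's `R(n, p)`, for the same `a`, `b` and `m`. -/
noncomputable def weierstrassRadius (a b : ℝ) (m : ℕ) : ℝ :=
  (2 ^ (1 / (m : ℝ)) - 1) / (b * (2 ^ (1 / (m : ℝ)) - 1) + 1 / a)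

lemma two_rpow_inv_sub_one_pos {m : ℕ} (hm : m ≠ 0) : 0 < (2 : ℝ) ^ (1 / (m : ℝ)) - 1 :=
  sub_pos.mpr (Real.one_lt_rpow one_lt_two (by positivity))

section WeierstrassPhi

variable {a b : ℝ} {m : ℕ}

lemma weierstrassPhi_nonneg (ha : 0 < a) {t : ℝ} (ht : 0 ≤ t) (hbt : b * t < 1) :
    0 ≤ weierstrassPhi a b m t := by
  have hg : 0 ≤ t / (a * (1 - b * t)) := div_nonneg ht (mul_pos ha (by linarith)).le
  unfold weierstrassPhi
  linarith [one_le_pow₀ (n := m) (by linarith : (1 : ℝ) ≤ 1 + t / (a * (1 - b * t)))]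

lemma weierstrassPhi_le_of_le (ha : 0 < a) (hb : 0 ≤ b) {s t : ℝ} (hs : 0 ≤ s) (hst : s ≤ t)
    (hbt : b * t < 1) : weierstrassPhi a b m s ≤ weierstrassPhi a b m t := by
  have hbs : b * s ≤ b * t := mul_le_mul_of_nonneg_left hst hb
  have hgs : 0 ≤ s / (a * (1 - b * s)) := div_nonneg hs (mul_pos ha (by linarith)).le
  have hg : s / (a * (1 - b * s)) ≤ t / (a * (1 - b * t)) :=
    div_le_div₀ (hs.trans hst) hst (mul_pos ha (by linarith))
      (mul_le_mul_of_nonneg_left (by linarith) ha.le)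
  unfold weierstrassPhi
  linarith [pow_le_pow_left₀ (by linarith) (add_le_add_right hg 1) m]

lemma weierstrassPhi_mul_le (ha : 0 < a) (hb : 0 ≤ b) {s t : ℝ} (hs0 : 0 ≤ s) (hs1 : s ≤ 1)
    (ht : 0 ≤ t) (hbt : b * t < 1) :
    weierstrassPhi a b m (s * t) ≤ s * weierstrassPhi a b m t := by
  set g := t / (a * (1 - b * t))
  have hst : s * t ≤ t := mul_le_of_le_one_left ht hs1
  have hbst : b * (s * t) ≤ b * t := mul_le_mul_of_nonneg_left hst hb
  have hg : 0 ≤ g := div_nonneg ht (mul_pos ha (by linarith)).le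
  have hgst : 0 ≤ s * t / (a * (1 - b * (s * t))) :=
    div_nonneg (mul_nonneg hs0 ht) (mul_pos ha (by linarith)).le
  have hshrink : s * t / (a * (1 - b * (s * t))) ≤ s * g := by
    rw [← mul_div_assoc]
    exact div_le_div₀ (mul_nonneg hs0 ht) le_rfl (mul_pos ha (by linarith))
      (mul_le_mul_of_nonneg_left (by linarith) ha.le)
  have hconvex : (1 + s * g) ^ m ≤ s * (1 + g) ^ m + (1 - s) := by
    have := (convexOn_pow m).2 (Set.mem_Ici.mpr (by linarith : (0 : ℝ) ≤ 1 + g))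
      (Set.mem_Ici.mpr zero_le_one) hs0 (sub_nonneg.mpr hs1) (add_sub_cancel s 1)
    simp only [smul_eq_mul, one_pow, mul_one] at this
    rwa [show s * (1 + g) + (1 - s) = 1 + s * g by ring] at this
  have hpow : (1 + s * t / (a * (1 - b * (s * t)))) ^ m ≤ (1 + s * g) ^ m :=
    pow_le_pow_left₀ (by linarith) (by linarith) m
  unfold weierstrassPhi
  linarith

lemma mul_lt_one_of_lt_div {c t : ℝ} (ha : 0 < a) (hb : 0 ≤ b) (hc : 0 < c)
    (ht : t < c / (b * c + 1 / a)) : b * t < 1 := by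
  have hden : 0 < b * c + 1 / a := by positivity
  rw [lt_div_iff₀ hden] at ht
  nlinarith [one_div_pos.mpr ha]

lemma weierstrassPhi_lt_one (hm : m ≠ 0) (ha : 0 < a) (hb : 0 ≤ b) {t : ℝ} (ht0 : 0 ≤ t)
    (ht : t < weierstrassRadius a b m) : weierstrassPhi a b m t < 1 := by
  have hc := two_rpow_inv_sub_one_pos hm
  set c := (2 : ℝ) ^ (1 / (m : ℝ)) - 1
  have hbt : 0 < 1 - b * t := by linarith [mul_lt_one_of_lt_div ha hb hc ht]
  have hcm : (1 + c) ^ m = 2 := by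
    rw [add_sub_cancel, one_div, Real.rpow_inv_natCast_pow zero_le_two hm]
  have hg : 0 ≤ t / (a * (1 - b * t)) := div_nonneg ht0 (mul_pos ha hbt).le
  have hgc : t / (a * (1 - b * t)) < c := by
    rw [weierstrassRadius, lt_div_iff₀ (by positivity)] at ht
    rw [div_lt_iff₀ (mul_pos ha hbt)]
    have hexpand : t * (b * c + 1 / a) * a = t * (a * b * c) + t := by field_simp
    linarith [mul_lt_mul_of_pos_right ht ha]
  unfold weierstrassPhi
  linarith [pow_lt_pow_left₀ (by linarith : 1 + t / (a * (1 - b * t)) < 1 + c) (by linarith) hm]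

end WeierstrassPhi

lemma le_initial_and_gauge_le_pow_two_pow {φ : ℝ → ℝ} {e : ℕ → ℝ}
    (hφ0 : ∀ t ∈ Set.Icc 0 (e 0), 0 ≤ φ t) (hmono : MonotoneOn φ (Set.Icc 0 (e 0)))
    (hmul : ∀ s ∈ Set.Icc (0 : ℝ) 1, ∀ t ∈ Set.Icc 0 (e 0), φ (s * t) ≤ s * φ t)
    (hφe : φ (e 0) ≤ 1) (he : ∀ k, 0 ≤ e k) (hstep : ∀ k, e k ≤ e 0 → e (k + 1) ≤ φ (e k) * e k)
    (k : ℕ) : e k ≤ e 0 ∧ φ (e k) ≤ φ (e 0) ^ 2 ^ k := by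
  induction k with
  | zero => simp
  | succ k ih =>
    obtain ⟨hek, hφk⟩ := ih
    have hmem : e k ∈ Set.Icc 0 (e 0) := ⟨he k, hek⟩
    have hr0 : 0 ≤ φ (e 0) := hφ0 _ ⟨he 0, le_rfl⟩
    have hs : φ (e k) ∈ Set.Icc (0 : ℝ) 1 := ⟨hφ0 _ hmem, hφk.trans (pow_le_one₀ hr0 hφe)⟩
    have hnext : e (k + 1) ≤ φ (e k) * e k := hstep k hek
    have hshrink : φ (e k) * e k ≤ e k := mul_le_of_le_one_left (he k) hs.2
    refine ⟨hnext.trans (hshrink.trans hek), ?_⟩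
    calc φ (e (k + 1)) ≤ φ (φ (e k) * e k) :=
          hmono ⟨he _, hnext.trans (hshrink.trans hek)⟩
            ⟨mul_nonneg hs.1 (he k), hshrink.trans hek⟩ hnext
      _ ≤ φ (e k) * φ (e k) := hmul _ hs _ hmem
      _ ≤ φ (e 0) ^ 2 ^ k * φ (e 0) ^ 2 ^ k := mul_le_mul hφk hφk hs.1 (pow_nonneg hr0 _)
      _ = φ (e 0) ^ 2 ^ (k + 1) := by rw [← pow_add, ← two_mul, pow_succ']

lemma le_initial_and_weierstrassPhi_le_pow_two_pow {a b : ℝ} {m : ℕ} (ha : 0 < a) (hb : 0 ≤ b)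
    {e : ℕ → ℝ} (he : ∀ k, 0 ≤ e k) (hbe : b * e 0 < 1) (hφe : weierstrassPhi a b m (e 0) ≤ 1)
    (hstep : ∀ k, e k ≤ e 0 → e (k + 1) ≤ weierstrassPhi a b m (e k) * e k) (k : ℕ) :
    e k ≤ e 0 ∧ weierstrassPhi a b m (e k) ≤ weierstrassPhi a b m (e 0) ^ 2 ^ k := by
  have hbt : ∀ t ∈ Set.Icc 0 (e 0), b * t < 1 := fun t ht =>
    (mul_le_mul_of_nonneg_left ht.2 hb).trans_lt hbe
  exact le_initial_and_gauge_le_pow_two_pow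
    (fun t ht => weierstrassPhi_nonneg ha ht.1 (hbt t ht))
    (fun s hs t ht hst => weierstrassPhi_le_of_le ha hb hs.1 hst (hbt t ht))
    (fun s hs t ht => weierstrassPhi_mul_le ha hb hs.1 hs.2 ht.1 (hbt t ht)) hφe he hstep k

lemma le_pow_two_pow_sub_one_mul {d : ℕ → ℝ} {r : ℝ} (hr : 0 ≤ r)
    (hd : ∀ k, d (k + 1) ≤ r ^ 2 ^ k * d k) (k : ℕ) : d k ≤ r ^ (2 ^ k - 1) * d 0 := by
  induction k with
  | zero => simp
  | succ k ih =>
    calc d (k + 1) ≤ r ^ 2 ^ k * (r ^ (2 ^ k - 1) * d 0) :=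
          (hd k).trans (mul_le_mul_of_nonneg_left ih (pow_nonneg hr _))
      _ = r ^ (2 ^ (k + 1) - 1) * d 0 := by
          rw [← mul_assoc, ← pow_add]
          congr 2
          have := Nat.one_le_two_pow (n := k)
          rw [pow_succ]
          omega

lemma tendsto_of_norm_sub_le_pow_two_pow_sub_one_mul {E : Type*} [SeminormedAddCommGroup E]
    {u : ℕ → E} {l : E} {r C : ℝ} (hr0 : 0 ≤ r) (hr1 : r < 1)
    (h : ∀ k, ‖u k - l‖ ≤ r ^ (2 ^ k - 1) * C) : Tendsto u atTop (𝓝 l) := by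
  have hexp : Tendsto (fun k : ℕ => 2 ^ k - 1) atTop atTop :=
    tendsto_atTop_mono (fun k => by have := Nat.lt_two_pow_self (n := k); simp only [id]; omega)
      tendsto_id
  have hpow : Tendsto (fun k : ℕ => r ^ (2 ^ k - 1)) atTop (𝓝 0) :=
    (tendsto_pow_atTop_nhds_zero_of_lt_one hr0 hr1).comp hexp
  rw [tendsto_iff_norm_sub_tendsto_zero]
  exact squeeze_zero (fun _ => norm_nonneg _) h (by simpa using hpow.mul_const C)

/-- The vector `(y - ξ)/d(ξ)`; its `p`-norm is the paper's `E(y)`. -/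
noncomputable def relErr {K : Type*} [NormedField K] {n : ℕ} (ξ y : Fin n → K) (i : Fin n) : ℝ :=
  ‖y i - ξ i‖ / dsep ξ i

noncomputable def weierstrassStep {K : Type*} [NormedField K] {n : ℕ} (f : Polynomial K)
    (y : Fin n → K) : Fin n → K :=
  fun i => y i - Wcorr f y i

section Weierstrass

variable {K : Type*} [NormedField K] {n : ℕ}

lemma dsep_nonneg (x : Fin n → K) (i : Fin n) : 0 ≤ dsep x i :=
  Real.sInf_nonneg <| by rintro _ ⟨j, -, rfl⟩; exact norm_nonneg _

lemma dsep_le (x : Fin n → K) {i j : Fin n} (hji : j ≠ i) : dsep x i ≤ ‖x i - x j‖ :=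
  csInf_le ⟨0, by rintro _ ⟨k, -, rfl⟩; exact norm_nonneg _⟩ ⟨j, hji, rfl⟩

lemma dsep_pos (hn : 2 ≤ n) {x : Fin n → K} (hx : Function.Injective x) (i : Fin n) :
    0 < dsep x i := by
  have : Nontrivial (Fin n) := Fin.nontrivial_iff_two_le.mpr hn
  obtain ⟨j, hj⟩ := exists_ne i
  have hne : {r : ℝ | ∃ j, j ≠ i ∧ r = ‖x i - x j‖}.Nonempty := ⟨_, j, hj, rfl⟩
  obtain ⟨k, hk, hmin⟩ := hne.csInf_mem <|
    (Set.finite_range fun j => ‖x i - x j‖).subset (by rintro _ ⟨j, -, rfl⟩; exact ⟨j, rfl⟩)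
  rw [dsep, hmin, norm_pos_iff, sub_ne_zero]
  exact fun h => hk (hx h).symm

variable {ξ y : Fin n → K} {p q : ℝ≥0∞}

lemma relErr_nonneg (ξ y : Fin n → K) (i : Fin n) : 0 ≤ relErr ξ y i :=
  div_nonneg (norm_nonneg _) (dsep_nonneg ξ i)

lemma norm_sub_le_relErr_mul (hn : 2 ≤ n) (hξ : Function.Injective ξ) {i j : Fin n}
    (hji : j ≠ i) : ‖y i - ξ i‖ ≤ relErr ξ y i * ‖ξ i - ξ j‖ :=
  calc ‖y i - ξ i‖ = relErr ξ y i * dsep ξ i := (div_mul_cancel₀ _ (dsep_pos hn hξ i).ne').symm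
    _ ≤ _ := mul_le_mul_of_nonneg_left (dsep_le ξ hji) (relErr_nonneg ξ y i)

lemma relErr_add_relErr_le [p.HolderConjugate q] {i j : Fin n} (hij : i ≠ j) :
    relErr ξ y i + relErr ξ y j ≤ epow 2 q * pnorm p (relErr ξ y) := by
  have := sum_le_epow_card_mul_pnorm (p := p) (q := q) (relErr_nonneg ξ y) {i, j}
  rwa [Finset.sum_pair hij, Finset.card_pair hij, Nat.cast_ofNat] at this

lemma one_sub_mul_norm_sub_le_norm_sub (hn : 2 ≤ n) (hξ : Function.Injective ξ)
    [p.HolderConjugate q] {i j : Fin n} (hij : i ≠ j) :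
    (1 - epow 2 q * pnorm p (relErr ξ y)) * ‖ξ i - ξ j‖ ≤ ‖y i - y j‖ := by
  have htri : ‖ξ i - ξ j‖ ≤ ‖y i - y j‖ + ‖y i - ξ i‖ + ‖y j - ξ j‖ :=
    calc ‖ξ i - ξ j‖ = ‖(y i - y j) - (y i - ξ i) + (y j - ξ j)‖ := by ring_nf
      _ ≤ _ := (norm_add_le _ _).trans (add_le_add_left (norm_sub_le _ _) _)
  have hi : ‖y i - ξ i‖ ≤ relErr ξ y i * ‖ξ i - ξ j‖ := norm_sub_le_relErr_mul hn hξ hij.symm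
  have hj : ‖y j - ξ j‖ ≤ relErr ξ y j * ‖ξ i - ξ j‖ := by
    rw [norm_sub_rev (ξ i)]
    exact norm_sub_le_relErr_mul hn hξ hij
  have hsum : relErr ξ y i + relErr ξ y j ≤ epow 2 q * pnorm p (relErr ξ y) :=
    relErr_add_relErr_le hij
  nlinarith [mul_le_mul_of_nonneg_right hsum (norm_nonneg (ξ i - ξ j))]

lemma injective_of_mul_pnorm_relErr_lt_one (hn : 2 ≤ n) (hξ : Function.Injective ξ)
    [p.HolderConjugate q] (hE : epow 2 q * pnorm p (relErr ξ y) < 1) : Function.Injective y := by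
  intro i j hij
  by_contra hne
  have hsep : (1 - epow 2 q * pnorm p (relErr ξ y)) * ‖ξ i - ξ j‖ ≤ ‖y i - y j‖ :=
    one_sub_mul_norm_sub_le_norm_sub hn hξ hne
  rw [hij, sub_self, norm_zero] at hsep
  have : 0 < ‖ξ i - ξ j‖ := norm_pos_iff.mpr (sub_ne_zero.mpr (hξ.ne hne))
  nlinarith

lemma weierstrassStep_sub_eq {f : Polynomial K} (hf : f.leadingCoeff ≠ 0)
    (hroot : IsRootVector f ξ) (hy : Function.Injective y) (i : Fin n) :
    weierstrassStep f y i - ξ i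
      = (y i - ξ i) * (1 - ∏ j ∈ univ.erase i, (1 + (y j - ξ j) / (y i - y j))) := by
  have hW : Wcorr f y i = (y i - ξ i) * ∏ j ∈ univ.erase i, (1 + (y j - ξ j) / (y i - y j)) := by
    rw [Wcorr, hroot, ← Finset.mul_prod_erase univ _ (mem_univ i), mul_div_mul_left _ _ hf,
      mul_div_assoc, ← Finset.prod_div_distrib]
    refine congrArg _ (Finset.prod_congr rfl fun j hj => ?_)
    have hne : y i - y j ≠ 0 := sub_ne_zero.mpr (hy.ne (Finset.ne_of_mem_erase hj).symm)
    field_simp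
    ring
  rw [weierstrassStep, hW]
  ring

lemma norm_sub_div_sub_le_relErr_div (hn : 2 ≤ n) (hξ : Function.Injective ξ) [p.HolderConjugate q]
    (hE : epow 2 q * pnorm p (relErr ξ y) < 1) {i j : Fin n} (hji : j ≠ i) :
    ‖(y j - ξ j) / (y i - y j)‖ ≤ relErr ξ y j / (1 - epow 2 q * pnorm p (relErr ξ y)) := by
  have hsep : (1 - epow 2 q * pnorm p (relErr ξ y)) * ‖ξ i - ξ j‖ ≤ ‖y i - y j‖ :=
    one_sub_mul_norm_sub_le_norm_sub hn hξ hji.symm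
  have hξij : 0 < ‖ξ i - ξ j‖ := norm_pos_iff.mpr (sub_ne_zero.mpr (hξ.ne hji.symm))
  have hyj : ‖y j - ξ j‖ ≤ relErr ξ y j * ‖ξ i - ξ j‖ := by
    rw [norm_sub_rev (ξ i)]
    exact norm_sub_le_relErr_mul hn hξ hji.symm
  have h1 : 0 < 1 - epow 2 q * pnorm p (relErr ξ y) := by linarith
  rw [norm_div, div_le_div_iff₀ ((mul_pos h1 hξij).trans_le hsep) h1]
  calc ‖y j - ξ j‖ * (1 - epow 2 q * pnorm p (relErr ξ y))
      ≤ relErr ξ y j * ‖ξ i - ξ j‖ * (1 - epow 2 q * pnorm p (relErr ξ y)) := by gcongr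
    _ ≤ relErr ξ y j * ‖y i - y j‖ := by
      rw [mul_assoc, mul_comm ‖ξ i - ξ j‖]
      exact mul_le_mul_of_nonneg_left hsep (relErr_nonneg ξ y j)

lemma norm_weierstrassStep_sub_le (hn : 2 ≤ n) (hξ : Function.Injective ξ) [p.HolderConjugate q]
    {f : Polynomial K} (hf : f.leadingCoeff ≠ 0) (hroot : IsRootVector f ξ)
    (hE : epow 2 q * pnorm p (relErr ξ y) < 1) (i : Fin n) :
    ‖weierstrassStep f y i - ξ i‖ ≤ weierstrassPhi (epow ((n : ℝ) - 1) p) (epow 2 q) (n - 1)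
      (pnorm p (relErr ξ y)) * ‖y i - ξ i‖ := by
  set E := pnorm p (relErr ξ y)
  set a := epow ((n : ℝ) - 1) p
  set T := univ.erase i
  set t : Fin n → K := fun j => (y j - ξ j) / (y i - y j)
  have hn1 : (0 : ℝ) < n - 1 := sub_pos.mpr (Nat.one_lt_cast.mpr hn)
  have hT : ((#T : ℕ) : ℝ) = n - 1 := by
    rw [Finset.card_erase_of_mem (mem_univ i), Finset.card_univ, Fintype.card_fin,
      Nat.cast_sub (by omega), Nat.cast_one]
  have h1 : 0 < 1 - epow 2 q * E := by linarith
  have ha : 0 < a := epow_pos hn1 p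
  have hsum : (∑ j ∈ T, ‖t j‖) / #T ≤ E / (a * (1 - epow 2 q * E)) := by
    have hHolder := sum_le_epow_card_mul_pnorm (p := p) (q := q) (relErr_nonneg ξ y) T
    rw [hT, epow_eq_div_epow (p := p) hn1] at hHolder
    rw [hT, div_le_iff₀ hn1]
    calc ∑ j ∈ T, ‖t j‖ ≤ ∑ j ∈ T, relErr ξ y j / (1 - epow 2 q * E) :=
          Finset.sum_le_sum fun j hj =>
            norm_sub_div_sub_le_relErr_div hn hξ hE (Finset.ne_of_mem_erase hj)
      _ = (∑ j ∈ T, relErr ξ y j) / (1 - epow 2 q * E) := (Finset.sum_div ..).symm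
      _ ≤ ((n - 1) / a * E) / (1 - epow 2 q * E) := by gcongr
      _ = E / (a * (1 - epow 2 q * E)) * (n - 1) := by field_simp
  have hprod : ∏ j ∈ T, (1 + ‖t j‖) ≤ (1 + E / (a * (1 - epow 2 q * E))) ^ (n - 1) := by
    refine (Finset.prod_one_add_le_pow_card T fun j _ => norm_nonneg (t j)).trans ?_
    rw [Finset.card_erase_of_mem (mem_univ i), Finset.card_univ, Fintype.card_fin] at *
    gcongr
  rw [weierstrassStep_sub_eq hf hroot (injective_of_mul_pnorm_relErr_lt_one hn hξ hE) i,
    norm_mul, mul_comm, norm_sub_rev 1]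
  gcongr
  exact (Finset.norm_prod_one_add_sub_one_le_prod_sub_one T t).trans
    (by unfold weierstrassPhi; linarith)

lemma pnorm_relErr_weierstrassStep_le (hn : 2 ≤ n) (hξ : Function.Injective ξ)
    [p.HolderConjugate q] {f : Polynomial K} (hf : f.leadingCoeff ≠ 0)
    (hroot : IsRootVector f ξ) (hE : epow 2 q * pnorm p (relErr ξ y) < 1) :
    pnorm p (relErr ξ (weierstrassStep f y)) ≤ weierstrassPhi (epow ((n : ℝ) - 1) p) (epow 2 q)
      (n - 1) (pnorm p (relErr ξ y)) * pnorm p (relErr ξ y) := by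
  have hn1 : (0 : ℝ) < n - 1 := sub_pos.mpr (Nat.one_lt_cast.mpr hn)
  refine pnorm_le_mul_pnorm (ENNReal.HolderConjugate.ne_zero p q)
    (weierstrassPhi_nonneg (epow_pos hn1 p) (pnorm_nonneg p _) hE) fun i => ?_
  rw [abs_of_nonneg (relErr_nonneg _ _ i), abs_of_nonneg (relErr_nonneg _ _ i), relErr, relErr,
    ← mul_div_assoc]
  exact div_le_div_of_nonneg_right (norm_weierstrassStep_sub_le hn hξ hf hroot hE i)
    (dsep_nonneg ξ i)

end Weierstrass

theorem weierstrass_local_convergence_first_kind_general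
    {K : Type*} [NormedField K] {n : ℕ} (hn : 2 ≤ n)
    (f : Polynomial K) (hdeg : f.natDegree = n)
    (ξ : Fin n → K) (hroot : IsRootVector f ξ) (hξ : Function.Injective ξ)
    (p q : ℝ≥0∞) (hpq : 1 / p + 1 / q = 1)
    (E : (Fin n → K) → ℝ)
    (hE : ∀ y : Fin n → K, E y = pnorm p (fun i => ‖y i - ξ i‖ / dsep ξ i))
    (φ : ℝ → ℝ)
    (hφ : ∀ t : ℝ, φ t = (1 + t / (epow ((n : ℝ) - 1) p * (1 - epow 2 q * t))) ^ (n - 1) - 1)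
    (x : ℕ → Fin n → K)
    (hinit : E (x 0) < ((2:ℝ) ^ ((1:ℝ) / ((n:ℝ) - 1)) - 1) /
      (epow 2 q * ((2:ℝ) ^ ((1:ℝ) / ((n:ℝ) - 1)) - 1) + 1 / epow ((n : ℝ) - 1) p))
    (hiter : ∀ k : ℕ, x (k+1) = fun i => x k i - Wcorr f (x k) i) :
    (∀ k : ℕ, Function.Injective (x k)) ∧
    φ (E (x 0)) < 1 ∧
    (∀ i : Fin n, Filter.Tendsto (fun k => x k i) Filter.atTop (nhds (ξ i))) ∧
    (∀ k : ℕ, ∀ i : Fin n,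
      ‖x (k+1) i - ξ i‖ ≤ φ (E (x 0)) ^ 2 ^ k * ‖x k i - ξ i‖) ∧
    (∀ k : ℕ, ∀ i : Fin n,
      ‖x k i - ξ i‖ ≤ φ (E (x 0)) ^ (2 ^ k - 1) * ‖x 0 i - ξ i‖) := by
  have : p.HolderConjugate q := ENNReal.holderConjugate_iff.mpr (by simpa only [one_div] using hpq)
  have hf : f.leadingCoeff ≠ 0 :=
    Polynomial.leadingCoeff_ne_zero.mpr (by rintro rfl; simp at hdeg; omega)
  obtain rfl : E = fun y => pnorm p (relErr ξ y) := funext hE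
  obtain rfl : φ = weierstrassPhi (epow ((n : ℝ) - 1) p) (epow 2 q) (n - 1) := funext hφ
  have hstep : ∀ k, x (k + 1) = weierstrassStep f (x k) := hiter
  have hm : n - 1 ≠ 0 := by omega
  have ha := epow_pos (sub_pos.mpr (Nat.one_lt_cast.mpr hn)) p
  have hb := (epow_pos two_pos q).le
  set e := fun k => pnorm p (relErr ξ (x k))
  have he : ∀ k, 0 ≤ e k := fun k => pnorm_nonneg _ _
  have hR : e 0 < weierstrassRadius (epow ((n : ℝ) - 1) p) (epow 2 q) (n - 1) := by
    rwa [weierstrassRadius, Nat.cast_pred (by omega)]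
  have hbe : ∀ t ≤ e 0, epow 2 q * t < 1 := fun t ht =>
    mul_lt_one_of_lt_div ha hb (two_rpow_inv_sub_one_pos hm) (ht.trans_lt hR)
  have hφ1 := weierstrassPhi_lt_one hm ha hb (he 0) hR
  have hφ0 := weierstrassPhi_nonneg (m := n - 1) ha (he 0) (hbe _ le_rfl)
  have hgauge := le_initial_and_weierstrassPhi_le_pow_two_pow ha hb he (hbe _ le_rfl) hφ1.le
    fun k hk => by
      simp only [e, hstep k]
      exact pnorm_relErr_weierstrassStep_le hn hξ hf hroot (hbe _ hk)
  have hbk : ∀ k, epow 2 q * e k < 1 := fun k => hbe _ (hgauge k).1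
  have hcontract :
      ∀ k i, ‖x (k + 1) i - ξ i‖ ≤ weierstrassPhi _ _ _ (e 0) ^ 2 ^ k * ‖x k i - ξ i‖ :=
    fun k i => by
      rw [hstep k]
      exact (norm_weierstrassStep_sub_le hn hξ hf hroot (hbk k) i).trans
        (mul_le_mul_of_nonneg_right (hgauge k).2 (norm_nonneg _))
  have herror (i : Fin n) := le_pow_two_pow_sub_one_mul (d := fun k => ‖x k i - ξ i‖) hφ0
    (fun k => hcontract k i)
  exact ⟨fun k => injective_of_mul_pnorm_relErr_lt_one hn hξ (hbk k), hφ1,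
    fun i => tendsto_of_norm_sub_le_pow_two_pow_sub_one_mul hφ0 hφ1 (herror i), hcontract,
    fun k i => herror i k⟩

/-- local convergence theorem of the first kind for the Weierstrass method.
If `E(x⁰) = ‖(x⁰−ξ)/d(ξ)‖_p < R(n,p)`, then the Weierstrass iteration is well defined,
converges to `ξ`, with quadratic error estimates governed by `λ = φ(E(x⁰)) < 1`. -/
theorem weierstrass_local_convergence_first_kind
    {K : Type*} [NormedField K] {n : ℕ} (hn : 2 ≤ n)
    (f : Polynomial K) (hdeg : f.natDegree = n)
    (ξ : Fin n → K) (hroot : IsRootVector f ξ) (hξ : Function.Injective ξ)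
    (p q : ℝ≥0∞) (hp : 1 ≤ p) (hpq : 1 / p + 1 / q = 1)
    (E : (Fin n → K) → ℝ)
    (hE : ∀ y : Fin n → K, E y = pnorm p (fun i => ‖y i - ξ i‖ / dsep ξ i))
    (φ : ℝ → ℝ)
    (hφ : ∀ t : ℝ, φ t = (1 + t / (epow ((n : ℝ) - 1) p * (1 - epow 2 q * t))) ^ (n - 1) - 1)
    (x : ℕ → Fin n → K)
    (hinit : E (x 0) < ((2:ℝ) ^ ((1:ℝ) / ((n:ℝ) - 1)) - 1) /
      (epow 2 q * ((2:ℝ) ^ ((1:ℝ) / ((n:ℝ) - 1)) - 1) + 1 / epow ((n : ℝ) - 1) p))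
    (hiter : ∀ k : ℕ, x (k+1) = fun i => x k i - Wcorr f (x k) i) :
    (∀ k : ℕ, Function.Injective (x k)) ∧
    φ (E (x 0)) < 1 ∧
    (∀ i : Fin n, Filter.Tendsto (fun k => x k i) Filter.atTop (nhds (ξ i))) ∧
    (∀ k : ℕ, ∀ i : Fin n,
      ‖x (k+1) i - ξ i‖ ≤ φ (E (x 0)) ^ 2 ^ k * ‖x k i - ξ i‖) ∧
    (∀ k : ℕ, ∀ i : Fin n,
      ‖x k i - ξ i‖ ≤ φ (E (x 0)) ^ (2 ^ k - 1) * ‖x 0 i - ξ i‖) :=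
  weierstrass_local_convergence_first_kind_general hn f hdeg ξ hroot hξ p q hpq E hE φ hφ x hinit
    hiter
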